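/- arXiv:1308.2047 — 2 statements merged into one kernel-verified Lean document; each statement's English description precedes it below -/
import Mathlib

section
/- Let λ, μ, λ′, μ′ be typical weights with λ+μ = λ′+μ′ and (λ₁+μ₁) + (λ₂+μ₂) = 0. Then there exists an equivariant F-linear isomorphism L(λ)⊗L(μ) → L(λ′)⊗L(μ′), i.e. a linear isomorphism intertwining Δ(E), Δ(F) and Δ(Q(h)) for all h ∈ ℤ². -/
set_option synthInstance.maxHeartbeats 1000000
set_option maxHeartbeats 1000000
noncomputable section
open scoped TensorProduct

abbrev F : Type := RatFunc ℂ
def q : F := RatFunc.X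

/-- The quantum integer [n] = (qⁿ − q⁻ⁿ)/(q − q⁻¹). -/
def qn (n : ℤ) : F := (q ^ n - q ^ (-n)) / (q - q⁻¹)

abbrev V : Type := Fin 2 → F
def v0 : V := Pi.single 0 1
def v1 : V := Pi.single 1 1

def Eop : V →ₗ[F] V := Matrix.toLin' !![0, 1; 0, 0]
def Fop (l : ℤ × ℤ) : V →ₗ[F] V := Matrix.toLin' !![0, 0; qn (l.1 + l.2), 0]
def Qop (l : ℤ × ℤ) (h : ℤ × ℤ) : V →ₗ[F] V :=
  Matrix.toLin' !![q ^ (h.1 * l.1 + h.2 * l.2), 0; 0, q ^ (h.1 * (l.1 - 1) + h.2 * (l.2 + 1))]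
def Pop (l : ℤ × ℤ) : V →ₗ[F] V :=
  Matrix.toLin' !![(-1 : F) ^ l.2, 0; 0, (-1 : F) ^ (l.2 + 1)]
def Kop (l : ℤ × ℤ) : V →ₗ[F] V := Qop l (1, 1)
def Kinv (l : ℤ × ℤ) : V →ₗ[F] V := Qop l (-1, -1)

def ΔE (l m : ℤ × ℤ) : V ⊗[F] V →ₗ[F] V ⊗[F] V :=
  TensorProduct.map Eop (Kinv m) + TensorProduct.map (Pop l) Eop
def ΔF (l m : ℤ × ℤ) : V ⊗[F] V →ₗ[F] V ⊗[F] V :=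
  TensorProduct.map (Fop l) LinearMap.id + TensorProduct.map (Kop l ∘ₗ Pop l) (Fop m)
def ΔQ (l m : ℤ × ℤ) (h : ℤ × ℤ) : V ⊗[F] V →ₗ[F] V ⊗[F] V :=
  TensorProduct.map (Qop l h) (Qop m h)


/-! For `λ + μ` atypical, `g = v₀ ⊗ v₁` generates `L(λ) ⊗ L(μ)`: since `[λ₁ + λ₂] ≠ 0`, the
vectors `E g, g, F E g, F g` form a basis. Besides `E² = F² = 0`, also `EF + FE = 0` holds, because
`K_μ⁻¹ = K_λ` and `[μ₁ + μ₂] = -[λ₁ + λ₂]`; so in this basis `E`, `F` and `Q(h)` act by matrices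
that depend only on `λ + μ`. Sending one such basis to the other is the required isomorphism. -/

open Kronecker TensorProduct

-- `RatFunc` has its own `ℕ`- and `ℤ`-algebra instances, which `module` does not recognise.
attribute [local instance 2000] Semiring.toNatAlgebra Ring.toIntAlgebra

lemma Module.Basis.equiv_comp_toLin {ι R M M' : Type*} [CommSemiring R] [AddCommMonoid M]
    [Module R M] [AddCommMonoid M'] [Module R M'] [Fintype ι] [DecidableEq ι]
    (b : Module.Basis ι R M) (b' : Module.Basis ι R M') (A : Matrix ι ι R) :
    (b.equiv b' (Equiv.refl ι)).toLinearMap ∘ₗ Matrix.toLin b b A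
      = Matrix.toLin b' b' A ∘ₗ (b.equiv b' (Equiv.refl ι)).toLinearMap :=
  b.ext fun i => by simp [Matrix.toLin_self]

lemma neg_one_zpow_eq_or {R : Type*} [DivisionRing R] (k : ℤ) :
    (-1 : R) ^ k = 1 ∨ (-1 : R) ^ k = -1 :=
  (Int.even_or_odd k).imp Even.neg_one_zpow Odd.neg_one_zpow

lemma q_ne_zero : q ≠ 0 := RatFunc.X_ne_zero

lemma q_zpow_ne_one {n : ℤ} (hn : n ≠ 0) : q ^ n ≠ 1 := fun h => by
  obtain ⟨k, hk, hqk⟩ :=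
    isOfFinOrder_iff_pow_eq_one.mp (isOfFinOrder_iff_zpow_eq_one.mpr ⟨n, hn, h⟩)
  exact RatFunc.transcendental_X.pow hk (hqk ▸ isAlgebraic_one)

lemma q_zpow_sub_zpow_neg_ne_zero {n : ℤ} (hn : n ≠ 0) : q ^ n - q ^ (-n) ≠ 0 := by
  rw [sub_ne_zero]
  intro h
  apply q_zpow_ne_one (n := n + n) (by omega)
  rw [zpow_add₀ q_ne_zero]
  nth_rw 1 [h]
  rw [← zpow_add₀ q_ne_zero, neg_add_cancel, zpow_zero]

lemma qn_ne_zero {n : ℤ} (hn : n ≠ 0) : qn n ≠ 0 :=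
  div_ne_zero (q_zpow_sub_zpow_neg_ne_zero hn)
    (by simpa using q_zpow_sub_zpow_neg_ne_zero one_ne_zero)

lemma qn_neg (n : ℤ) : qn (-n) = -qn n := by
  rw [qn, qn, neg_neg, ← neg_div, neg_sub]

/-- `q ^ ⟨h, ν - k α⟩`, the eigenvalue of `Q(h)` on vectors of weight `ν - k α`. -/
def qWeight (ν h : ℤ × ℤ) (k : ℤ) : F := q ^ (h.1 * (ν.1 - k) + h.2 * (ν.2 + k))

lemma qWeight_mul_qWeight (ν μ h : ℤ × ℤ) (j k : ℤ) :
    qWeight ν h j * qWeight μ h k = qWeight (ν + μ) h (j + k) := by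
  rw [qWeight, qWeight, qWeight, ← zpow_add₀ q_ne_zero]
  congr 1
  simp only [Prod.fst_add, Prod.snd_add]
  ring

section OneSite

variable (l h : ℤ × ℤ)

@[simp] lemma Eop_v0 : Eop v0 = 0 := by ext i; fin_cases i <;> simp [Eop, v0]
@[simp] lemma Eop_v1 : Eop v1 = v0 := by ext i; fin_cases i <;> simp [Eop, v0, v1]
@[simp] lemma Fop_v0 : Fop l v0 = qn (l.1 + l.2) • v1 := by
  ext i; fin_cases i <;> simp [Fop, v0, v1]
@[simp] lemma Fop_v1 : Fop l v1 = 0 := by ext i; fin_cases i <;> simp [Fop, v1]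
@[simp] lemma Pop_v0 : Pop l v0 = (-1 : F) ^ l.2 • v0 := by ext i; fin_cases i <;> simp [Pop, v0]
@[simp] lemma Pop_v1 : Pop l v1 = -(-1 : F) ^ l.2 • v1 := by
  ext i; fin_cases i <;> simp [Pop, v1, zpow_add_one₀]
lemma Qop_v0 : Qop l h v0 = qWeight l h 0 • v0 := by
  ext i; fin_cases i <;> simp [Qop, qWeight, v0]
lemma Qop_v1 : Qop l h v1 = qWeight l h 1 • v1 := by
  ext i; fin_cases i <;> simp [Qop, qWeight, v1]
@[simp] lemma Kop_eq_smul : Kop l = q ^ (l.1 + l.2) • LinearMap.id := by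
  rw [Kop, Qop, ← Matrix.toLin'_one, ← map_smul]
  congr 1
  ext i j; fin_cases i <;> fin_cases j <;> simp
lemma Kinv_eq_smul : Kinv l = q ^ (-(l.1 + l.2)) • LinearMap.id := by
  rw [Kinv, Qop, ← Matrix.toLin'_one, ← map_smul]
  congr 1
  ext i j; fin_cases i <;> fin_cases j <;> simp <;> congr 1 <;> ring

end OneSite

section Tensor

variable {l m : ℤ × ℤ}

@[simp] lemma ΔE_tmul (x y : V) :
    ΔE l m (x ⊗ₜ y) = Eop x ⊗ₜ Kinv m y + Pop l x ⊗ₜ Eop y := rfl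

@[simp] lemma ΔF_tmul (x y : V) :
    ΔF l m (x ⊗ₜ y) = Fop l x ⊗ₜ y + Kop l (Pop l x) ⊗ₜ Fop m y := rfl

lemma ΔQ_tmul_of_eigen {h : ℤ × ℤ} {x y : V} {j k : ℤ}
    (hx : Qop l h x = qWeight l h j • x) (hy : Qop m h y = qWeight m h k • y) :
    ΔQ l m h (x ⊗ₜ y) = qWeight (l + m) h (j + k) • x ⊗ₜ y := by
  rw [ΔQ, map_tmul, hx, hy, smul_tmul_smul, qWeight_mul_qWeight]

lemma Kinv_eq_smul_of_atypical (hν : l.1 + m.1 + (l.2 + m.2) = 0) :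
    Kinv m = q ^ (l.1 + l.2) • LinearMap.id := by
  rw [Kinv_eq_smul, show m.1 + m.2 = -(l.1 + l.2) by omega, neg_neg]

lemma qn_eq_neg_of_atypical (hν : l.1 + m.1 + (l.2 + m.2) = 0) :
    qn (m.1 + m.2) = -qn (l.1 + l.2) := by
  rw [show m.1 + m.2 = -(l.1 + l.2) by omega, qn_neg]

-- `cyclicVec l m (i, j) = F^i E^(1-j) (v₀ ⊗ v₁)`, of weight `l + m - (i + j) α`.
variable (l m) in
def cyclicVec (i : Fin 2 × Fin 2) : V ⊗[F] V :=
  ![![ΔE l m (v0 ⊗ₜ v1), v0 ⊗ₜ v1], ![ΔF l m (ΔE l m (v0 ⊗ₜ v1)), ΔF l m (v0 ⊗ₜ v1)]] i.1 i.2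

lemma top_le_span_cyclicVec (hl : l.1 + l.2 ≠ 0) :
    ⊤ ≤ Submodule.span F (Set.range (cyclicVec l m)) := by
  set S := Submodule.span F (Set.range (cyclicVec l m))
  have mem (i) : cyclicVec l m i ∈ S := Submodule.subset_span ⟨i, rfl⟩
  have hs : (-1 : F) ^ l.2 * (-1) ^ l.2 = 1 := by rw [← mul_zpow]; norm_num
  have hc := qn_ne_zero hl
  have h00 : v0 ⊗ₜ v0 ∈ S := by
    convert S.smul_mem ((-1 : F) ^ l.2) (mem (0, 0)) using 1
    simp [cyclicVec, ← smul_tmul', smul_smul, hs]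
  have h01 : v0 ⊗ₜ v1 ∈ S := mem (0, 1)
  have h11 : v1 ⊗ₜ v1 ∈ S := by
    convert S.smul_mem (qn (l.1 + l.2))⁻¹ (mem (1, 1)) using 1
    simp [cyclicVec, ← smul_tmul', smul_smul, hc]
  have h10 : v1 ⊗ₜ v0 ∈ S := by
    have hsc : (-1 : F) ^ l.2 * qn (l.1 + l.2) ≠ 0 :=
      mul_ne_zero (zpow_ne_zero l.2 (neg_ne_zero.mpr one_ne_zero)) hc
    refine (S.smul_mem_iff hsc).mp ?_
    convert S.sub_mem (mem (1, 0)) (S.smul_mem (qn (m.1 + m.2) * q ^ (l.1 + l.2)) h01) using 1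
    simp [cyclicVec, ← smul_tmul', tmul_smul]
    linear_combination (norm := module)
      (-(qn (m.1 + m.2) * q ^ (l.1 + l.2))) • hs • (v0 ⊗ₜ[F] v1)
  rw [← ((Pi.basisFun F (Fin 2)).tensorProduct (Pi.basisFun F (Fin 2))).span_eq,
    Submodule.span_le]
  rintro _ ⟨⟨i, j⟩, rfl⟩
  fin_cases i <;> fin_cases j <;> simp only [Module.Basis.tensorProduct_apply, Pi.basisFun_apply]
  exacts [h00, h01, h10, h11]

variable (l m) in
def cyclicBasis (hl : l.1 + l.2 ≠ 0) : Module.Basis (Fin 2 × Fin 2) F (V ⊗[F] V) :=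
  basisOfTopLeSpanOfCardEqFinrank (cyclicVec l m) (top_le_span_cyclicVec hl) (by simp)

lemma coe_cyclicBasis (hl : l.1 + l.2 ≠ 0) : ⇑(cyclicBasis l m hl) = cyclicVec l m :=
  coe_basisOfTopLeSpanOfCardEqFinrank ..

-- The action on `cyclicVec`: `E` sends `g ↦ E g` and `F g ↦ -F E g`, `F` sends `g ↦ F g` and
-- `E g ↦ F E g`, and all other basis vectors to `0`.
def stdE : Matrix (Fin 2 × Fin 2) (Fin 2 × Fin 2) F := !![1, 0; 0, -1] ⊗ₖ !![0, 1; 0, 0]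
def stdF : Matrix (Fin 2 × Fin 2) (Fin 2 × Fin 2) F := !![0, 0; 1, 0] ⊗ₖ 1
def stdQ (ν h : ℤ × ℤ) : Matrix (Fin 2 × Fin 2) (Fin 2 × Fin 2) F :=
  Matrix.diagonal fun i => qWeight ν h (i.1.val + i.2.val)

lemma toLin_cyclicBasis_stdE (hl : l.1 + l.2 ≠ 0) (hν : l.1 + m.1 + (l.2 + m.2) = 0) :
    Matrix.toLin (cyclicBasis l m hl) (cyclicBasis l m hl) stdE = ΔE l m := by
  refine (cyclicBasis l m hl).ext fun i => ?_
  rw [Matrix.toLin_self]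
  rcases neg_one_zpow_eq_or (R := F) l.2 with hs | hs <;> fin_cases i <;>
    simp [coe_cyclicBasis, cyclicVec, stdE, Fintype.sum_prod_type, ← smul_tmul', tmul_smul,
      Kinv_eq_smul_of_atypical hν, qn_eq_neg_of_atypical hν, hs, neg_tmul, tmul_neg]
  all_goals module

lemma toLin_cyclicBasis_stdF (hl : l.1 + l.2 ≠ 0) (hν : l.1 + m.1 + (l.2 + m.2) = 0) :
    Matrix.toLin (cyclicBasis l m hl) (cyclicBasis l m hl) stdF = ΔF l m := by
  refine (cyclicBasis l m hl).ext fun i => ?_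
  rw [Matrix.toLin_self]
  fin_cases i <;>
    simp [coe_cyclicBasis, cyclicVec, stdF, Fintype.sum_prod_type, ← smul_tmul', tmul_smul,
      qn_eq_neg_of_atypical hν, neg_tmul, tmul_neg]
  all_goals module

lemma toLin_cyclicBasis_stdQ (hl : l.1 + l.2 ≠ 0) (h : ℤ × ℤ) :
    Matrix.toLin (cyclicBasis l m hl) (cyclicBasis l m hl) (stdQ (l + m) h) = ΔQ l m h := by
  have h00 := ΔQ_tmul_of_eigen (Qop_v0 l h) (Qop_v0 m h)
  have h01 := ΔQ_tmul_of_eigen (Qop_v0 l h) (Qop_v1 m h)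
  have h10 := ΔQ_tmul_of_eigen (Qop_v1 l h) (Qop_v0 m h)
  have h11 := ΔQ_tmul_of_eigen (Qop_v1 l h) (Qop_v1 m h)
  refine (cyclicBasis l m hl).ext fun i => ?_
  rw [Matrix.toLin_self]
  fin_cases i <;>
    simp [coe_cyclicBasis, cyclicVec, stdQ, Fintype.sum_prod_type, ← smul_tmul', tmul_smul,
      h00, h01, h10, h11]
  all_goals module

end Tensor

theorem atypical_tensor_iso_general (l m l' m' : ℤ × ℤ)
    (hl : l.1 + l.2 ≠ 0)
    (hl' : l'.1 + l'.2 ≠ 0)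
    (heq : l + m = l' + m') (hsum : l.1 + m.1 + (l.2 + m.2) = 0) :
    ∃ f : V ⊗[F] V →ₗ[F] V ⊗[F] V, Function.Bijective f ∧
      f ∘ₗ ΔE l m = ΔE l' m' ∘ₗ f ∧
      f ∘ₗ ΔF l m = ΔF l' m' ∘ₗ f ∧
      ∀ h : ℤ × ℤ, f ∘ₗ ΔQ l m h = ΔQ l' m' h ∘ₗ f := by
  have hsum' : l'.1 + m'.1 + (l'.2 + m'.2) = 0 := by
    simpa only [← Prod.fst_add, ← Prod.snd_add, heq] using hsum
  set b := cyclicBasis l m hl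
  set b' := cyclicBasis l' m' hl'
  refine ⟨b.equiv b' (Equiv.refl _), LinearEquiv.bijective _, ?_, ?_, fun h => ?_⟩
  · rw [← toLin_cyclicBasis_stdE hl hsum, ← toLin_cyclicBasis_stdE hl' hsum']
    exact b.equiv_comp_toLin b' stdE
  · rw [← toLin_cyclicBasis_stdF hl hsum, ← toLin_cyclicBasis_stdF hl' hsum']
    exact b.equiv_comp_toLin b' stdF
  · rw [← toLin_cyclicBasis_stdQ hl h, ← toLin_cyclicBasis_stdQ hl' h, heq]
    exact b.equiv_comp_toLin b' _

/-- for typical `λ, μ, λ′, μ′` with `λ+μ = λ′+μ′` atypical,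
`L(λ)⊗L(μ) ≅ L(λ′)⊗L(μ′)` equivariantly. -/
theorem atypical_tensor_iso (l m l' m' : ℤ × ℤ)
    (hl : l.1 + l.2 ≠ 0) (hm : m.1 + m.2 ≠ 0)
    (hl' : l'.1 + l'.2 ≠ 0) (hm' : m'.1 + m'.2 ≠ 0)
    (heq : l + m = l' + m') (hsum : l.1 + m.1 + (l.2 + m.2) = 0) :
    ∃ f : V ⊗[F] V →ₗ[F] V ⊗[F] V, Function.Bijective f ∧
      f ∘ₗ ΔE l m = ΔE l' m' ∘ₗ f ∧
      f ∘ₗ ΔF l m = ΔF l' m' ∘ₗ f ∧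
      ∀ h : ℤ × ℤ, f ∘ₗ ΔQ l m h = ΔQ l' m' h ∘ₗ f :=
  atypical_tensor_iso_general l m l' m' hl hl' heq hsum
end
end

section
/- Let λ, μ be typical weights with (λ₁+μ₁) + (λ₂+μ₂) = 0, and set M = L(λ)⊗L(μ). Suppose φ₁ : F → M and φ₂ : M → F are F-linear maps that are equivariant for the trivial action on F, i.e.: Δ(E)(φ₁(1)) = 0, Δ(F)(φ₁(1)) = 0, Δ(Q(h))(φ₁(1)) = φ₁(1) for all h ∈ ℤ², and φ₂∘Δ(E) = 0, φ₂∘Δ(F) = 0, φ₂∘Δ(Q(h)) = φ₂ for all h ∈ ℤ². Then φ₂∘φ₁ = 0. (This is the mechanism forcing the quantum U_q(gl(1|1))-invariant of every closed link to vanish: the trivial representation is not a direct summand of L(λ)⊗L(λ)*.) -/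
set_option synthInstance.maxHeartbeats 1000000
set_option maxHeartbeats 1000000
noncomputable section
open scoped TensorProduct

/-!
On `L(λ)` the operator `E` has the contracting homotopy `H = E₁₀` (`E H + H E = 1`), and `H`
anticommutes with the parity `P`. Hence `H ⊗ K_μ` is a contracting homotopy for
`Δ(E) = E ⊗ K_μ⁻¹ + P ⊗ E` on `L(λ) ⊗ L(μ)`, so every vector killed by `Δ(E)` lies in the
image of `Δ(E)`. In particular the invariant vector `φ₁(1)` is `Δ(E)`-exact, and `φ₂` vanishes
on it because `φ₂ ∘ Δ(E) = 0`.
-/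

section ContractingHomotopy

variable {R M N : Type*} [CommRing R] [AddCommGroup M] [Module R M] [AddCommGroup N] [Module R N]

def IsContractingHomotopy (d h : M →ₗ[R] M) : Prop :=
  d ∘ₗ h + h ∘ₗ d = LinearMap.id

theorem IsContractingHomotopy.ker_le_range {d h : M →ₗ[R] M} (hdh : IsContractingHomotopy d h) :
    LinearMap.ker d ≤ LinearMap.range d := by
  intro w hw
  refine ⟨h w, ?_⟩
  calc d (h w) = d (h w) + h (d w) := by rw [LinearMap.mem_ker.mp hw, map_zero, add_zero]
    _ = w := LinearMap.congr_fun hdh w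

/-- Graded Künneth: the cross terms `p h ⊗ e b + h p ⊗ b e` cancel because `p` anticommutes
with `h`. -/
theorem IsContractingHomotopy.tensorProduct {d h p : M →ₗ[R] M} {a b e : N →ₗ[R] N}
    (hdh : IsContractingHomotopy d h) (hph : p ∘ₗ h + h ∘ₗ p = 0)
    (hab : a ∘ₗ b = LinearMap.id) (hba : b ∘ₗ a = LinearMap.id) (heb : e ∘ₗ b = b ∘ₗ e) :
    IsContractingHomotopy (TensorProduct.map d a + TensorProduct.map p e)
      (TensorProduct.map h b) := by
  unfold IsContractingHomotopy at hdh ⊢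
  simp only [LinearMap.add_comp, LinearMap.comp_add, ← TensorProduct.map_comp, hab, hba, heb]
  calc TensorProduct.map (d ∘ₗ h) LinearMap.id + TensorProduct.map (p ∘ₗ h) (b ∘ₗ e)
        + (TensorProduct.map (h ∘ₗ d) LinearMap.id + TensorProduct.map (h ∘ₗ p) (b ∘ₗ e))
      = TensorProduct.map (d ∘ₗ h + h ∘ₗ d) LinearMap.id
        + TensorProduct.map (p ∘ₗ h + h ∘ₗ p) (b ∘ₗ e) := by
        rw [TensorProduct.map_add_left, TensorProduct.map_add_left]; abel
    _ = LinearMap.id := by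
        rw [hdh, hph, TensorProduct.map_zero_left, add_zero, TensorProduct.map_id]

end ContractingHomotopy

def Hop : V →ₗ[F] V := Matrix.toLin' !![0, 0; 1, 0]

theorem isContractingHomotopy_Eop_Hop : IsContractingHomotopy Eop Hop := by
  rw [IsContractingHomotopy, Eop, Hop, ← Matrix.toLin'_mul, ← Matrix.toLin'_mul, ← map_add,
    ← Matrix.toLin'_one]
  congr 1
  ext i j; fin_cases i <;> fin_cases j <;> simp

theorem Pop_comp_Hop_add_Hop_comp_Pop (l : ℤ × ℤ) : Pop l ∘ₗ Hop + Hop ∘ₗ Pop l = 0 := by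
  rw [Pop, Hop, ← Matrix.toLin'_mul, ← Matrix.toLin'_mul, ← map_add, ← map_zero Matrix.toLin']
  congr 1
  ext i j; fin_cases i <;> fin_cases j <;> simp [zpow_add_one₀]

theorem Kop_eq_smul_id (m : ℤ × ℤ) : Kop m = q ^ (m.1 + m.2) • LinearMap.id := by
  rw [Kop, Qop, ← Matrix.toLin'_one, ← map_smul]
  congr 1
  ext i j; fin_cases i <;> fin_cases j <;> simp

theorem Kinv_eq_smul_id (m : ℤ × ℤ) : Kinv m = (q ^ (m.1 + m.2))⁻¹ • LinearMap.id := by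
  rw [Kinv, Qop, ← Matrix.toLin'_one, ← map_smul, ← zpow_neg]
  congr 1
  ext i j; fin_cases i <;> fin_cases j <;> simp <;> ring_nf

theorem Kop_comp_Kinv (m : ℤ × ℤ) : Kop m ∘ₗ Kinv m = LinearMap.id := by
  have hq : q ^ (m.1 + m.2) ≠ 0 := zpow_ne_zero _ RatFunc.X_ne_zero
  rw [Kop_eq_smul_id, Kinv_eq_smul_id, LinearMap.smul_comp, LinearMap.comp_smul, smul_smul,
    mul_inv_cancel₀ hq, one_smul, LinearMap.id_comp]

theorem Kinv_comp_Kop (m : ℤ × ℤ) : Kinv m ∘ₗ Kop m = LinearMap.id := by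
  have hq : q ^ (m.1 + m.2) ≠ 0 := zpow_ne_zero _ RatFunc.X_ne_zero
  rw [Kop_eq_smul_id, Kinv_eq_smul_id, LinearMap.smul_comp, LinearMap.comp_smul, smul_smul,
    inv_mul_cancel₀ hq, one_smul, LinearMap.id_comp]

theorem Eop_comp_Kop (m : ℤ × ℤ) : Eop ∘ₗ Kop m = Kop m ∘ₗ Eop := by
  rw [Kop_eq_smul_id, LinearMap.comp_smul, LinearMap.smul_comp, LinearMap.id_comp,
    LinearMap.comp_id]

theorem isContractingHomotopy_ΔE (l m : ℤ × ℤ) :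
    IsContractingHomotopy (ΔE l m) (TensorProduct.map Hop (Kop m)) :=
  isContractingHomotopy_Eop_Hop.tensorProduct (Pop_comp_Hop_add_Hop_comp_Pop l)
    (Kinv_comp_Kop m) (Kop_comp_Kinv m) (Eop_comp_Kop m)

theorem trivial_not_direct_summand_general (l m : ℤ × ℤ)
    (φ₁ : F →ₗ[F] V ⊗[F] V) (φ₂ : V ⊗[F] V →ₗ[F] F)
    (h1E : ΔE l m (φ₁ 1) = 0)
    (h2E : φ₂ ∘ₗ ΔE l m = 0) :
    φ₂ ∘ₗ φ₁ = 0 := by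
  obtain ⟨x, hx⟩ := (isContractingHomotopy_ΔE l m).ker_le_range h1E
  refine LinearMap.ext_ring ?_
  rw [LinearMap.comp_apply, ← hx, ← LinearMap.comp_apply, h2E, LinearMap.zero_apply,
    LinearMap.zero_apply]

/-- if `λ+μ` is atypical then the composition of any equivariant maps
`F → L(λ)⊗L(μ) → F` (for the trivial action on `F`) vanishes; this is why the
`U_q(gl(1|1))`-invariant of every closed link is zero. -/
theorem trivial_not_direct_summand (l m : ℤ × ℤ)
    (hl : l.1 + l.2 ≠ 0) (hm : m.1 + m.2 ≠ 0) (hsum : l.1 + m.1 + (l.2 + m.2) = 0)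
    (φ₁ : F →ₗ[F] V ⊗[F] V) (φ₂ : V ⊗[F] V →ₗ[F] F)
    (h1E : ΔE l m (φ₁ 1) = 0) (h1F : ΔF l m (φ₁ 1) = 0)
    (h1Q : ∀ h : ℤ × ℤ, ΔQ l m h (φ₁ 1) = φ₁ 1)
    (h2E : φ₂ ∘ₗ ΔE l m = 0) (h2F : φ₂ ∘ₗ ΔF l m = 0)
    (h2Q : ∀ h : ℤ × ℤ, φ₂ ∘ₗ ΔQ l m h = φ₂) :
    φ₂ ∘ₗ φ₁ = 0 :=
  trivial_not_direct_summand_general l m φ₁ φ₂ h1E h2E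
end
end
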